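/- Fix integers k ≥ 1 and κ, m, n with k ≤ κ < m and 2m+1 ≤ n ≤ 3m−κ. Let G₁ = K_{n−2m} + \overline{K}_κ + \overline{K}_m + \overline{K}_{m−κ}. Then σ_{k+1}(G₁) = (n − 2m − 1 + κ) + k·m, which equals n + κ + (k−2)·m − 1. -/

import Mathlib

open SimpleGraph

/-- A set of vertices is independent if no two of its vertices are adjacent. -/
def SimpleGraph.IsIndepSet' {V : Type*} (G : SimpleGraph V) (s : Set V) : Prop :=
  s.Pairwise fun u v => ¬ G.Adj u v

/-- The independence number `α(G)`: the maximum size of an independent set. -/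
noncomputable def SimpleGraph.indepNum' {V : Type*} (G : SimpleGraph V) [Fintype V] : ℕ :=
  sSup {n | ∃ s : Finset V, G.IsIndepSet' ↑s ∧ s.card = n}

/-- `G` is `k`-connected: `G` has more than `k` vertices and deleting any set of
fewer than `k` vertices leaves a connected graph. -/
def SimpleGraph.IsKConnected {V : Type*} (G : SimpleGraph V) [Fintype V] (k : ℕ) : Prop :=
  k < Fintype.card V ∧ ∀ s : Set V, s.ncard < k → (G.induce sᶜ).Connected

/-- The connectivity `κ(G)`: the largest `k` such that `G` is `k`-connected. -/
noncomputable def SimpleGraph.connectivity' {V : Type*} (G : SimpleGraph V) [Fintype V] : ℕ :=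
  sSup {k | G.IsKConnected k}

/-- `σ_k(G)`: the minimum degree sum over independent sets of size `k`
(`⊤` if there is no such set). -/
noncomputable def SimpleGraph.sigmaDeg {V : Type*} (G : SimpleGraph V) [Fintype V]
    (k : ℕ) : ℕ∞ := by
  classical
  exact ⨅ s ∈ {s : Finset V | G.IsIndepSet' ↑s ∧ s.card = k}, (∑ x ∈ s, G.degree x : ℕ∞)

/-- A "blowup" graph: vertices are grouped in parts indexed by `ι`, where part `i` has
`sizes i` vertices, part `i` induces a complete graph if `compl i` holds (an edgeless graph
otherwise), and two parts `i`, `j` are completely joined iff `rel i j ∨ rel j i`. -/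
def blowup {ι : Type} (sizes : ι → ℕ) (compl : ι → Prop) (rel : ι → ι → Prop) :
    SimpleGraph (Σ i, Fin (sizes i)) where
  Adj x y := (x.1 = y.1 ∧ compl x.1 ∧ x ≠ y) ∨ (x.1 ≠ y.1 ∧ (rel x.1 y.1 ∨ rel y.1 x.1))
  symm := by
    constructor
    rintro x y (⟨h1, h2, h3⟩ | ⟨h1, h2⟩)
    · exact Or.inl ⟨h1.symm, h1 ▸ h2, h3.symm⟩
    · exact Or.inr ⟨h1.symm, h2.symm⟩
  loopless := ⟨by rintro x (⟨_, _, h⟩ | ⟨h, _⟩) <;> exact h rfl⟩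

/-- The graph `G₁ = K_{n-2m} + K̄_κ + K̄_m + K̄_{m-κ}` (sequential join). -/
def GraphG1 (n m κ : ℕ) : SimpleGraph (Σ i : Fin 4, Fin (![n - 2 * m, κ, m, m - κ] i)) :=
  blowup ![n - 2 * m, κ, m, m - κ] (fun i => i = 0) (fun i j => (i : ℕ) + 1 = (j : ℕ))

open Finset in
lemma deg_sigma {ι : Type} [Fintype ι] [DecidableEq ι] {β : ι → Type} [∀ i, Fintype (β i)]
    (G : SimpleGraph (Σ i, β i)) (x) [Fintype (G.neighborSet x)] [DecidableRel G.Adj] :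
    G.degree x = ∑ i, ((univ : Finset (β i)).filter (fun b => G.Adj x ⟨i, b⟩)).card := by
  rw [← card_neighborSet_eq_degree]
  have h1 : Fintype.card (G.neighborSet x) = (univ.filter (G.Adj x)).card := by
    rw [← Fintype.card_subtype]; exact Fintype.card_congr (Equiv.refl _)
  rw [h1, ← Finset.card_sigma]
  congr 1
  ext ⟨i, b⟩
  simp [Finset.mem_sigma]

open scoped Classical in
lemma deg0 (n m κ : ℕ) (a) [Fintype ((GraphG1 n m κ).neighborSet ⟨0, a⟩)] :
    (GraphG1 n m κ).degree ⟨0, a⟩ = (n - 2 * m - 1) + κ := by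
  rw [deg_sigma, Fin.sum_univ_four]
  simp [-Matrix.cons_val_zero, -Matrix.cons_val_one, -Matrix.cons_val, GraphG1, blowup, Sigma.mk.inj_iff]
  rw [Finset.filter_ne, Finset.card_erase_of_mem (Finset.mem_univ _)]
  rw [Finset.card_univ, Fintype.card_fin]
  simp [Matrix.cons_val_zero]

open scoped Classical in
lemma deg1 (n m κ : ℕ) (a) [Fintype ((GraphG1 n m κ).neighborSet ⟨1, a⟩)] :
    (GraphG1 n m κ).degree ⟨1, a⟩ = (n - 2 * m) + m := by
  rw [deg_sigma, Fin.sum_univ_four]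
  simp [-Matrix.cons_val_zero, -Matrix.cons_val_one, -Matrix.cons_val, GraphG1, blowup, Sigma.mk.inj_iff, show ((3:Fin 4):ℕ) = 3 from rfl]
  simp

open scoped Classical in
lemma deg2 (n m κ : ℕ) (hκm : κ ≤ m) (a) [Fintype ((GraphG1 n m κ).neighborSet ⟨2, a⟩)] :
    (GraphG1 n m κ).degree ⟨2, a⟩ = m := by
  rw [deg_sigma, Fin.sum_univ_four]
  simp [-Matrix.cons_val_zero, -Matrix.cons_val_one, -Matrix.cons_val, GraphG1, blowup, Sigma.mk.inj_iff, show ((3:Fin 4):ℕ) = 3 from rfl]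
  simp
  omega

open scoped Classical in
lemma deg3 (n m κ : ℕ) (a) [Fintype ((GraphG1 n m κ).neighborSet ⟨3, a⟩)] :
    (GraphG1 n m κ).degree ⟨3, a⟩ = m := by
  rw [deg_sigma, Fin.sum_univ_four]
  simp [-Matrix.cons_val_zero, -Matrix.cons_val_one, -Matrix.cons_val, GraphG1, blowup, Sigma.mk.inj_iff, show ((3:Fin 4):ℕ) = 3 from rfl]
  simp

/-- For `G₁ = K_{n-2m} + K̄_κ + K̄_m + K̄_{m-κ}` (with `k ≤ κ < m` and
`2m+1 ≤ n ≤ 3m-κ`), one has `σ_{k+1}(G₁) = (n - 2m - 1 + κ) + k·m`, which equals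
`n + κ + (k-2)·m - 1` (as integers). -/
theorem stmt_11 (k κ m n : ℕ) (hk : 1 ≤ k) (hkκ : k ≤ κ) (hκm : κ < m)
    (hn1 : 2 * m + 1 ≤ n) (hn2 : n ≤ 3 * m - κ) :
    (GraphG1 n m κ).sigmaDeg (k + 1) = ((n - 2 * m - 1 + κ) + k * m : ℕ) ∧
    ((n : ℤ) - 2 * m - 1 + κ) + k * m =
      (n : ℤ) + κ + ((k : ℤ) - 2) * m - 1 := by
  classical
  constructor
  · set G := GraphG1 n m κ with hG
    set N : ℕ := (n - 2 * m - 1 + κ) + k * m with hN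
    unfold SimpleGraph.sigmaDeg
    apply le_antisymm
    · -- upper bound: witness set
      have ha0 : 0 < n - 2 * m := by omega
      set a0 : Fin (![n - 2 * m, κ, m, m - κ] 0) := ⟨0, ha0⟩ with ha0def
      have hemb : Function.Injective
          (fun j : Fin k => (⟨2, ⟨j.1, show j.1 < m by omega⟩⟩ : Σ i : Fin 4, Fin (![n - 2 * m, κ, m, m - κ] i))) := by
        intro x y hxy
        simp [Sigma.mk.inj_iff, Fin.ext_iff] at hxy
        exact Fin.ext (congrArg (fun p => (p.2 : ℕ)) hxy)
      set s : Finset (Σ i : Fin 4, Fin (![n - 2 * m, κ, m, m - κ] i)) :=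
        insert ⟨0, a0⟩ ((Finset.univ : Finset (Fin k)).map ⟨_, hemb⟩) with hs
      have hnotmem : (⟨0, a0⟩ : Σ i : Fin 4, Fin (![n - 2 * m, κ, m, m - κ] i)) ∉
          ((Finset.univ : Finset (Fin k)).map ⟨_, hemb⟩) := by
        simp [Sigma.mk.inj_iff]
        intro x hx; exact absurd (congrArg Sigma.fst hx) (by simp)
      have hmem : s ∈ {t : Finset (Σ i : Fin 4, Fin (![n - 2 * m, κ, m, m - κ] i)) |
          G.IsIndepSet' ↑t ∧ t.card = k + 1} := by
        constructor
        · intro u hu v hv huv hadj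
          simp only [hs, Finset.coe_insert, Set.mem_insert_iff, Finset.coe_map,
            Set.mem_image, Finset.mem_coe, Finset.mem_map, Finset.mem_univ,
            Function.Embedding.coeFn_mk, true_and, Set.mem_setOf_eq] at hu hv
          rcases hu with hu | ⟨ju, hju⟩ <;> rcases hv with hv | ⟨jv, hjv⟩
          · exact huv (hu.trans hv.symm)
          · subst hu; rcases hjv with ⟨jv, rfl⟩
            simp [hG, GraphG1, blowup, Sigma.mk.inj_iff] at hadj
          · subst hv; rcases hju with ⟨ju, rfl⟩
            simp [hG, GraphG1, blowup, Sigma.mk.inj_iff] at hadj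
          · rcases hju with ⟨ju, rfl⟩; rcases hjv with ⟨jv, rfl⟩
            simp [hG, GraphG1, blowup, Sigma.mk.inj_iff] at hadj
        · rw [hs, Finset.card_insert_of_notMem hnotmem, Finset.card_map, Finset.card_univ,
            Fintype.card_fin]
      refine le_trans (iInf₂_le s hmem) ?_
      rw [← Nat.cast_sum]
      rw [Nat.cast_le]
      rw [hs, Finset.sum_insert hnotmem, Finset.sum_map]
      simp only [Function.Embedding.coeFn_mk]
      rw [deg0]
      have : ∀ j : Fin k, G.degree (⟨2, ⟨j.1, show j.1 < m by omega⟩⟩ :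
          Σ i : Fin 4, Fin (![n - 2 * m, κ, m, m - κ] i)) = m := fun j => deg2 n m κ (by omega) _
      rw [Finset.sum_congr rfl (fun j _ => this j), Finset.sum_const, Finset.card_univ,
        Fintype.card_fin, smul_eq_mul, hN]
    · refine le_iInf₂ fun s hs => ?_
      obtain ⟨hind, hcard⟩ := hs
      rw [← Nat.cast_sum, Nat.cast_le]
      set s0 := s.filter (fun x => x.1 = (0 : Fin 4)) with hs0
      have hc01 : s0.card ≤ 1 := by
        by_contra h
        have h2 : 1 < s0.card := by omega
        obtain ⟨x, y, hx, hy, hxy⟩ := Finset.one_lt_card_iff.mp h2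
        rw [hs0, Finset.mem_filter] at hx hy
        exact hind hx.1 hy.1 hxy (Or.inl ⟨hx.2.trans hy.2.symm, hx.2, hxy⟩)
      have hsum0 : ∑ x ∈ s0, G.degree x = s0.card * (n - 2 * m - 1 + κ) := by
        apply Finset.sum_const_nat
        intro x hx
        rw [hs0, Finset.mem_filter] at hx
        obtain ⟨i, a⟩ := x
        obtain rfl : i = 0 := hx.2
        exact deg0 n m κ a
      have hsum1 : (s.filter (fun x => ¬ x.1 = (0 : Fin 4))).card * m ≤
          ∑ x ∈ s.filter (fun x => ¬ x.1 = (0 : Fin 4)), G.degree x := by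
        rw [← smul_eq_mul, ← Finset.sum_const]
        apply Finset.sum_le_sum
        intro x hx
        rw [Finset.mem_filter] at hx
        obtain ⟨i, a⟩ := x
        fin_cases i
        · exact absurd rfl hx.2
        · exact le_trans (by omega) (le_of_eq (deg1 n m κ a).symm)
        · exact le_of_eq (deg2 n m κ (by omega) a).symm
        · exact le_of_eq (deg3 n m κ a).symm
      have hcards : s0.card + (s.filter (fun x => ¬ x.1 = (0 : Fin 4))).card = k + 1 := by
        rw [hs0, Finset.card_filter_add_card_filter_not, hcard]
      have := Finset.sum_filter_add_sum_filter_not s (fun x => x.1 = (0 : Fin 4)) (G.degree ·)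
      have hd0m : n - 2 * m - 1 + κ < m := by omega
      calc (n - 2 * m - 1 + κ) + k * m
          ≤ s0.card * (n - 2 * m - 1 + κ) +
            (s.filter (fun x => ¬ x.1 = (0 : Fin 4))).card * m := by
            rcases Nat.le_one_iff_eq_zero_or_eq_one.mp hc01 with h | h <;>
              · rw [h] at hcards ⊢; nlinarith
        _ ≤ ∑ x ∈ s0, G.degree x + ∑ x ∈ s.filter (fun x => ¬ x.1 = (0 : Fin 4)), G.degree x := by
            rw [hsum0]; omega
        _ = ∑ x ∈ s, G.degree x := this
  · push_cast
    ring
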